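/- Energy dissipation of the implicit gradient-flow scheme with saturation (scheme S2): let ψ be a saturation with saturation level α, and suppose ρ^n, ρ^{n+1} satisfy the scheme-S2 relations. If ρ_i^{n+1} ≥ 0 for all 1 ≤ i ≤ N (as is guaranteed whenever 0 ≤ ρ_i^n ≤ α for all i by the unconditional bound preservation of the implicit scheme), then the discrete energy satisfies E_Δ[ρ^{n+1}] ≤ E_Δ[ρ^n], with no restriction on Δt. -/

import Mathlib

/-- A *saturation* with saturation level `α > 0`: a continuous non-increasing function
`ψ : [0,∞) → ℝ` with `ψ α = 0` and `(α − s)·ψ s > 0` for every `s ≥ 0`, `s ≠ α`. -/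
def IsSaturation (ψ : ℝ → ℝ) (α : ℝ) : Prop :=
  0 < α ∧ ContinuousOn ψ (Set.Ici 0) ∧
    (∀ s₁ s₂, 0 ≤ s₁ → s₁ ≤ s₂ → ψ s₂ ≤ ψ s₁) ∧
    ψ α = 0 ∧ ∀ s, 0 ≤ s → s ≠ α → 0 < (α - s) * ψ s

/-- Discrete free energy
`E_Δ[ρ] = Σ_i H(ρ_i)Δx + Σ_i V_i ρ_i Δx + (1/2) Σ_i Σ_k W_{i−k} ρ_i ρ_k Δx²`. -/
noncomputable def discreteEnergy (Δx : ℝ) (N : ℕ) (H : ℝ → ℝ) (V : ℕ → ℝ)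
    (W : ℤ → ℝ) (ρ : ℕ → ℝ) : ℝ :=
  (∑ i ∈ Finset.Icc 1 N, H (ρ i) * Δx) + (∑ i ∈ Finset.Icc 1 N, V i * ρ i * Δx) +
    (1 / 2) * ∑ i ∈ Finset.Icc 1 N, ∑ k ∈ Finset.Icc 1 N,
      W ((i : ℤ) - (k : ℤ)) * ρ i * ρ k * Δx ^ 2

/-- Tangent line inequality for a convex differentiable function. -/
lemma tangent_le_of_convex {H : ℝ → ℝ} (hc : ConvexOn ℝ Set.univ H)
    (hd : Differentiable ℝ H) (a b : ℝ) : H b - H a ≤ deriv H b * (b - a) := by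
  rcases lt_trichotomy a b with h | h | h
  · have hs := hc.slope_le_deriv (Set.mem_univ a) (Set.mem_univ b) h (hd b)
    rw [slope_def_field] at hs
    have hba : (0:ℝ) < b - a := by linarith
    have := (div_le_iff₀ hba).mp hs
    nlinarith
  · simp [h]
  · have hs := hc.deriv_le_slope (Set.mem_univ b) (Set.mem_univ a) h (hd b)
    rw [slope_def_field] at hs
    have hab : (0:ℝ) < a - b := by linarith
    have h2 := (le_div_iff₀ hab).mp hs
    nlinarith

/-- Summation by parts (Abel summation) on `Icc 1 N`. -/
lemma abel_sum (ξ F : ℕ → ℝ) :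
    ∀ N, 1 ≤ N → ∑ i ∈ Finset.Icc 1 N, ξ i * (F i - F (i - 1)) =
      ξ N * F N - ξ 1 * F 0 + ∑ i ∈ Finset.Icc 1 (N - 1), (ξ i - ξ (i + 1)) * F i := by
  intro N hN
  induction N, hN using Nat.le_induction with
  | base => simp; ring
  | succ n hn ih =>
    rw [Finset.sum_Icc_succ_top (by omega : 1 ≤ n + 1), ih]
    rw [show n + 1 - 1 = n from rfl,
      show Finset.Icc 1 n = Finset.Icc 1 (n - 1 + 1) by congr 1; omega,
      Finset.sum_Icc_succ_top (by omega : 1 ≤ n - 1 + 1),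
      show n - 1 + 1 = n by omega]
    ring

/-- Unconditional energy dissipation of the implicit gradient-flow scheme S2 with
saturation: `u i` denotes `u_{i+1/2}` and `F i` denotes `F_{i+1/2}` (no-flux boundary
conditions `F 0 = F N = 0`); `ξ` is the entropy variable and the convolution uses the
midpoint values `ρ^{**} = (ρ^{n+1} + ρ^n)/2`. -/
theorem S2_energy_dissipation
    (ψ : ℝ → ℝ) (α : ℝ) (hψ : IsSaturation ψ α)
    (Δx Δt : ℝ) (hΔx : 0 < Δx) (hΔt : 0 < Δt)
    (N : ℕ) (hN : 1 ≤ N)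
    (H : ℝ → ℝ) (hHconv : ConvexOn ℝ Set.univ H) (hHdiff : Differentiable ℝ H)
    (V : ℕ → ℝ) (W : ℤ → ℝ) (hW : ∀ j, W (-j) = W j)
    (ρn ρn1 ξ u F : ℕ → ℝ)
    (hξ : ∀ i, ξ i = deriv H (ρn1 i) + V i +
      ∑ k ∈ Finset.Icc 1 N, W ((i : ℤ) - (k : ℤ)) * ((ρn1 k + ρn k) / 2) * Δx)
    (hu : ∀ i, u i = -(ξ (i + 1) - ξ i) / Δx)
    (hF0 : F 0 = 0) (hFN : F N = 0)
    (hFdef : ∀ i, 1 ≤ i → i + 1 ≤ N →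
      F i = ρn1 i * max (ψ (ρn1 (i + 1))) 0 * max (u i) 0 +
        ρn1 (i + 1) * max (ψ (ρn1 i)) 0 * min (u i) 0)
    (hscheme : ∀ i, 1 ≤ i → i ≤ N →
      ρn1 i = ρn i - Δt / Δx * (F i - F (i - 1)))
    (hpos : ∀ i, 1 ≤ i → i ≤ N → 0 ≤ ρn1 i) :
    discreteEnergy Δx N H V W ρn1 ≤ discreteEnergy Δx N H V W ρn := by
  set S := Finset.Icc 1 N with hS
  have hΔx' : Δx ≠ 0 := ne_of_gt hΔx
  have hWsym : ∀ i k : ℕ, W ((k : ℤ) - (i : ℤ)) = W ((i : ℤ) - (k : ℤ)) := fun i k => by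
    rw [show ((k : ℤ) - i) = -((i : ℤ) - k) by ring, hW]
  -- Step 1: convexity bound E₁ - E₀ ≤ Σ ξᵢ (ρⁿ⁺¹ᵢ - ρⁿᵢ) Δx
  have hHsum : ∑ i ∈ S, H (ρn1 i) * Δx - ∑ i ∈ S, H (ρn i) * Δx ≤
      ∑ i ∈ S, deriv H (ρn1 i) * (ρn1 i - ρn i) * Δx := by
    rw [← Finset.sum_sub_distrib]
    refine Finset.sum_le_sum fun i _ => ?_
    rw [← sub_mul]
    exact mul_le_mul_of_nonneg_right (tangent_le_of_convex hHconv hHdiff (ρn i) (ρn1 i)) hΔx.le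
  have hVsum : ∑ i ∈ S, V i * ρn1 i * Δx - ∑ i ∈ S, V i * ρn i * Δx =
      ∑ i ∈ S, V i * (ρn1 i - ρn i) * Δx := by
    rw [← Finset.sum_sub_distrib]
    exact Finset.sum_congr rfl fun i _ => by ring
  -- symmetrization of the interaction term
  have hswap : ∑ i ∈ S, ∑ k ∈ S, W ((i : ℤ) - k) * ((ρn1 i + ρn i) / 2) * (ρn1 k - ρn k) * Δx ^ 2
      = ∑ i ∈ S, ∑ k ∈ S, W ((i : ℤ) - k) * ((ρn1 k + ρn k) / 2) * (ρn1 i - ρn i) * Δx ^ 2 := by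
    rw [Finset.sum_comm]
    exact Finset.sum_congr rfl fun i _ => Finset.sum_congr rfl fun k _ => by rw [hWsym]
  have hA : (∑ i ∈ S, ∑ k ∈ S, W ((i : ℤ) - k) * ρn1 i * ρn1 k * Δx ^ 2) -
      (∑ i ∈ S, ∑ k ∈ S, W ((i : ℤ) - k) * ρn i * ρn k * Δx ^ 2) =
      2 * ∑ i ∈ S, ∑ k ∈ S, W ((i : ℤ) - k) * ((ρn1 k + ρn k) / 2) * (ρn1 i - ρn i) * Δx ^ 2 := by
    have e1 : (∑ i ∈ S, ∑ k ∈ S, W ((i : ℤ) - k) * ρn1 i * ρn1 k * Δx ^ 2) -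
        (∑ i ∈ S, ∑ k ∈ S, W ((i : ℤ) - k) * ρn i * ρn k * Δx ^ 2) =
        (∑ i ∈ S, ∑ k ∈ S, W ((i : ℤ) - k) * ((ρn1 i + ρn i) / 2) * (ρn1 k - ρn k) * Δx ^ 2) +
        (∑ i ∈ S, ∑ k ∈ S, W ((i : ℤ) - k) * ((ρn1 k + ρn k) / 2) * (ρn1 i - ρn i) * Δx ^ 2) := by
      simp only [← Finset.sum_sub_distrib, ← Finset.sum_add_distrib]
      exact Finset.sum_congr rfl fun i _ => Finset.sum_congr rfl fun k _ => by ring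
    rw [e1, hswap]; ring
  have hWsum : (1 / 2) * (∑ i ∈ S, ∑ k ∈ S, W ((i : ℤ) - k) * ρn1 i * ρn1 k * Δx ^ 2) -
      (1 / 2) * (∑ i ∈ S, ∑ k ∈ S, W ((i : ℤ) - k) * ρn i * ρn k * Δx ^ 2) =
      ∑ i ∈ S, (∑ k ∈ S, W ((i : ℤ) - k) * ((ρn1 k + ρn k) / 2) * Δx) * (ρn1 i - ρn i) * Δx := by
    have e2 : ∑ i ∈ S, (∑ k ∈ S, W ((i : ℤ) - k) * ((ρn1 k + ρn k) / 2) * Δx) *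
        (ρn1 i - ρn i) * Δx =
        ∑ i ∈ S, ∑ k ∈ S, W ((i : ℤ) - k) * ((ρn1 k + ρn k) / 2) * (ρn1 i - ρn i) * Δx ^ 2 := by
      refine Finset.sum_congr rfl fun i _ => ?_
      rw [Finset.sum_mul, Finset.sum_mul]
      exact Finset.sum_congr rfl fun k _ => by ring
    rw [e2]; linarith [hA]
  have hsum3 : (∑ i ∈ S, deriv H (ρn1 i) * (ρn1 i - ρn i) * Δx) +
      (∑ i ∈ S, V i * (ρn1 i - ρn i) * Δx) +
      (∑ i ∈ S, (∑ k ∈ S, W ((i : ℤ) - k) * ((ρn1 k + ρn k) / 2) * Δx) * (ρn1 i - ρn i) * Δx) =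
      ∑ i ∈ S, ξ i * (ρn1 i - ρn i) * Δx := by
    rw [← Finset.sum_add_distrib, ← Finset.sum_add_distrib]
    exact Finset.sum_congr rfl fun i _ => by rw [hξ i]; ring
  have key1 : discreteEnergy Δx N H V W ρn1 - discreteEnergy Δx N H V W ρn ≤
      ∑ i ∈ S, ξ i * (ρn1 i - ρn i) * Δx := by
    unfold discreteEnergy
    rw [← hS] at *
    linarith [hHsum, hVsum, hWsum, hsum3]
  -- Step 2: the scheme makes this quantity nonpositive
  have hT : ∑ i ∈ S, ξ i * (ρn1 i - ρn i) * Δx =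
      -Δt * ∑ i ∈ S, ξ i * (F i - F (i - 1)) := by
    rw [Finset.mul_sum]
    refine Finset.sum_congr rfl fun i hi => ?_
    rw [hS, Finset.mem_Icc] at hi
    rw [hscheme i hi.1 hi.2]
    field_simp
    ring
  have habel := abel_sum ξ F N hN
  rw [hF0, hFN] at habel
  have hterm : ∀ i ∈ Finset.Icc 1 (N - 1), 0 ≤ (ξ i - ξ (i + 1)) * F i := by
    intro i hi
    rw [Finset.mem_Icc] at hi
    have hi1 : i + 1 ≤ N := by omega
    have hxi : ξ i - ξ (i + 1) = Δx * u i := by rw [hu i]; field_simp; ring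
    rw [hxi, hFdef i hi.1 hi1]
    have h1 : 0 ≤ ρn1 i := hpos i hi.1 (by omega)
    have h2 : 0 ≤ ρn1 (i + 1) := hpos (i + 1) (by omega) hi1
    have h3 : 0 ≤ max (ψ (ρn1 (i + 1))) 0 := le_max_right _ _
    have h4 : 0 ≤ max (ψ (ρn1 i)) 0 := le_max_right _ _
    have h5 : 0 ≤ u i * max (u i) 0 := by
      rcases le_or_gt (u i) 0 with h | h
      · rw [max_eq_right h]; simp
      · rw [max_eq_left h.le]; nlinarith
    have h6 : 0 ≤ u i * min (u i) 0 := by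
      rcases le_or_gt (u i) 0 with h | h
      · rw [min_eq_left h]; nlinarith
      · rw [min_eq_right h.le]; simp
    have h7 : 0 ≤ ρn1 i * max (ψ (ρn1 (i + 1))) 0 * (u i * max (u i) 0) +
        ρn1 (i + 1) * max (ψ (ρn1 i)) 0 * (u i * min (u i) 0) :=
      add_nonneg (mul_nonneg (mul_nonneg h1 h3) h5) (mul_nonneg (mul_nonneg h2 h4) h6)
    calc (0:ℝ) ≤ Δx * (ρn1 i * max (ψ (ρn1 (i + 1))) 0 * (u i * max (u i) 0) +
        ρn1 (i + 1) * max (ψ (ρn1 i)) 0 * (u i * min (u i) 0)) := mul_nonneg hΔx.le h7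
      _ = Δx * u i * (ρn1 i * max (ψ (ρn1 (i + 1))) 0 * max (u i) 0 +
          ρn1 (i + 1) * max (ψ (ρn1 i)) 0 * min (u i) 0) := by ring
  have hsum0 : 0 ≤ ∑ i ∈ Finset.Icc 1 (N - 1), (ξ i - ξ (i + 1)) * F i :=
    Finset.sum_nonneg hterm
  have key2 : ∑ i ∈ S, ξ i * (ρn1 i - ρn i) * Δx ≤ 0 := by
    rw [hT, habel]
    nlinarith [mul_nonneg hΔt.le hsum0]
  linarith [key1, key2]
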